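/- arXiv:2304.06629 — 2 statements merged into one kernel-verified Lean document; each statement's English description precedes it below -/
import Mathlib

section
/- (Main theorem, combinatorial form.) For every integer partition λ and every real number α, the signed sum of principal lower hook products over all column deletions of λ equals the λ-Jack derangement number: Σ_{I ⊆ {1,…,λ₁}} (−1)^{|I|} · Π_{j ∉ I} ( α(λ₁ − j − #{i ∈ I : i > j}) + λ′_j ) = Σ_{k=1}^{λ₁} d^λ_k α^{λ₁−k} = D^λ_α. -/
open Finset

/-- The conjugate partition: `conjP L j = λ′_j = #{i : λ_i ≥ j}`. -/
def conjP (L : List ℕ) (j : ℕ) : ℕ := (L.filter (fun p => decide (j ≤ p))).length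

/-- `L` is the list of parts of an integer partition (weakly decreasing, positive parts). -/
def IsPartition (L : List ℕ) : Prop := L.Pairwise (· ≥ ·) ∧ ∀ p ∈ L, 0 < p

/-- Colored permutations of shape `L`: a coloring `c` of the symbols `1,…,λ₁` (represented by
`Fin λ₁`, symbol `i` being `i.1 + 1`) with `1 ≤ c i ≤ λ′_i`, together with a permutation whose
cycles are monochromatic. -/
def ColoredPerms (L : List ℕ) :
    Set ((Fin L.headI → ℕ) × Equiv.Perm (Fin L.headI)) :=
  {x | (∀ i, 1 ≤ x.1 i ∧ x.1 i ≤ conjP L (i.1 + 1)) ∧ ∀ i, x.1 (x.2 i) = x.1 i}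

/-- Colored derangements of shape `L`: colored permutations such that `σ i = i → c i ≠ 1`. -/
def ColoredDerangements (L : List ℕ) :
    Set ((Fin L.headI → ℕ) × Equiv.Perm (Fin L.headI)) :=
  {x | x ∈ ColoredPerms L ∧ ∀ i, x.2 i = i → x.1 i ≠ 1}

/-- Number of cycles of a permutation in its disjoint cycle decomposition,
fixed points counting as cycles. -/
noncomputable def cycleCount {m : ℕ} (σ : Equiv.Perm (Fin m)) : ℕ :=
  σ.cycleType.card + (Finset.univ.filter fun i => σ i = i).card

/-- `dCount L k` : the number `d^λ_k` of colored derangements of shape `L`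
whose permutation has exactly `k` cycles. -/
noncomputable def dCount (L : List ℕ) (k : ℕ) : ℕ :=
  Set.ncard {x | x ∈ ColoredDerangements L ∧ cycleCount x.2 = k}

/-- The λ-Jack derangement number `D^λ_α = Σ_{k=1}^{λ₁} d^λ_k α^{λ₁−k}`. -/
noncomputable def JackD (L : List ℕ) (α : ℝ) : ℝ :=
  ∑ k ∈ Finset.Icc 1 L.headI, (dCount L k : ℝ) * α ^ (L.headI - k)

/-- Block (0-based) of a point of `{1,…,2m}` (points represented by `Fin (2m)`,
point `p` being `p.1 + 1`; the block of `p` is `k` iff `p ∈ {2k−1, 2k}` 1-based). -/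
def blk {m : ℕ} (p : Fin (2 * m)) : Fin m := ⟨p.1 / 2, by have := p.2; omega⟩

/-- Colored perfect matchings of shape `L`: a perfect matching of `{1,…,2λ₁}` (a
fixed-point-free involution) together with a coloring `c` of the blocks `{2k−1,2k}` with
`1 ≤ c_k ≤ λ′_k`, such that matched points lie in blocks of the same color. -/
def ColoredMatchings (L : List ℕ) :
    Set ((Fin L.headI → ℕ) × Equiv.Perm (Fin (2 * L.headI))) :=
  {x | Function.Involutive x.2 ∧ (∀ p, x.2 p ≠ p) ∧
        (∀ k, 1 ≤ x.1 k ∧ x.1 k ≤ conjP L (k.1 + 1)) ∧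
        (∀ p, x.1 (blk (x.2 p)) = x.1 (blk p))}

/-- Colored perfect matching derangements of shape `L`: colored perfect matchings such that
whenever a block `{2k−1,2k}` is itself a pair of the matching, its color is not `1`. -/
def ColoredMatchDerangements (L : List ℕ) :
    Set ((Fin L.headI → ℕ) × Equiv.Perm (Fin (2 * L.headI))) :=
  {x | x ∈ ColoredMatchings L ∧ ∀ p, blk (x.2 p) = blk p → x.1 (blk p) ≠ 1}

/-- The principal lower hook length `h_j = α(λ₁ − j) + λ′_j` of the cell `(1,j)`. -/
noncomputable def hlow (L : List ℕ) (α : ℝ) (j : ℕ) : ℝ :=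
  α * ((L.headI : ℝ) - (j : ℝ)) + (conjP L j : ℝ)

/-- `fixPtCount m k` : the number `d_{m,k}` of permutations of `{1,…,m}` with exactly
`k` fixed points. -/
noncomputable def fixPtCount (m k : ℕ) : ℕ :=
  Set.ncard {σ : Equiv.Perm (Fin m) | (Finset.univ.filter fun i => σ i = i).card = k}

/-- `Ematch m` : the number of perfect matchings of `{1,…,2m}` containing none of the base
pairs `{2t−1, 2t}`. -/
noncomputable def Ematch (m : ℕ) : ℕ :=
  Set.ncard {σ : Equiv.Perm (Fin (2 * m)) |
    Function.Involutive σ ∧ (∀ p, σ p ≠ p) ∧ ∀ p, (σ p).1 / 2 ≠ p.1 / 2}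

/-!
A kept column `j ∉ I` contributes `α · #{kept k > j} + λ′_j`. The product of these factors is the
generating function, weighted by `α ^ (λ₁ − #cycles)`, of the colored permutations of shape `λ` in
which every deleted column is a fixed point of colour `1`: going from the last column to the first,
a kept column either opens a new cycle in one of its `λ′_j` colours, or is inserted in front of one
of the later kept columns, takes its colour (allowed since `λ′` is weakly decreasing) and adds one
factor `α`. Inclusion–exclusion over the deleted columns leaves exactly the colored derangements,
and sorting these by their number of cycles gives `D^λ_α`.
-/

open Finset Equiv Equiv.Perm

namespace Equiv.Perm

variable {β : Type*} [Fintype β] [DecidableEq β]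

-- `Fintype.card β` minus the number of cycles of `σ`, fixed points included.
def cayleyLength (σ : Perm β) : ℕ := (σ.cycleType.map (· - 1)).sum

@[simp]
theorem cayleyLength_one : cayleyLength (1 : Perm β) = 0 := by
  simp [cayleyLength]

theorem Disjoint.cayleyLength_mul {σ τ : Perm β} (h : σ.Disjoint τ) :
    cayleyLength (σ * τ) = cayleyLength σ + cayleyLength τ := by
  simp [cayleyLength, h.cycleType_mul]

theorem IsCycle.cayleyLength_eq {σ : Perm β} (hσ : σ.IsCycle) :
    cayleyLength σ = #σ.support - 1 := by
  simp [Perm.cayleyLength, hσ.cycleType]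

theorem IsCycle.cayleyLength_swap_mul {σ : Perm β} (hσ : σ.IsCycle) {x : β} (hx : σ x ≠ x) :
    cayleyLength σ = cayleyLength (swap x (σ x) * σ) + 1 := by
  by_cases h2 : σ (σ x) = x
  · have hswap := hσ.eq_swap_of_apply_apply_eq_self hx h2
    have hne : x ≠ σ x := Ne.symm hx
    rw [hswap, swap_apply_left, swap_mul_self, cayleyLength_one,
      (isCycle_swap hne).cayleyLength_eq, card_support_swap hne]
  · have hx' : x ∈ σ.support := mem_support.2 hx
    rw [hσ.cayleyLength_eq, (hσ.swap_mul hx h2).cayleyLength_eq, support_swap_mul_eq σ x h2,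
      card_sdiff_of_subset (singleton_subset_iff.2 hx'), card_singleton]
    have := hσ.two_le_card_support
    omega

theorem cayleyLength_swap_mul {σ : Perm β} {x : β} (hx : σ x ≠ x) :
    cayleyLength σ = cayleyLength (swap x (σ x) * σ) + 1 := by
  set ρ := σ.cycleOf x
  have hρ : ρ ∈ σ.cycleFactorsFinset := cycleOf_mem_cycleFactorsFinset_iff.2 (mem_support.2 hx)
  have hd : (σ * ρ⁻¹).Disjoint ρ := disjoint_mul_inv_of_mem_cycleFactorsFinset hρ
  have hρx : ρ x = σ x := cycleOf_apply_self σ x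
  have hfix : ∀ y ∈ ρ.support, (σ * ρ⁻¹) y = y := fun y hy =>
    (hd y).resolve_right (mem_support.1 hy)
  have hsupp : (swap x (ρ x) * ρ).support ≤ ρ.support := fun y hy =>
    (mem_support_swap_mul_imp_mem_support_ne hy).1
  have hxρ : x ∈ ρ.support := mem_support.2 (by rwa [hρx])
  have hcomm : swap x (σ x) * σ = σ * ρ⁻¹ * (swap x (ρ x) * ρ) := by
    rw [← mul_assoc, mul_swap_eq_swap_mul, hfix x hxρ, ← hρx,
      hfix (ρ x) (apply_mem_support.2 hxρ), mul_assoc, inv_mul_cancel_right]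
  rw [hcomm, (hd.mono le_rfl hsupp).cayleyLength_mul]
  conv_lhs => rw [← inv_mul_cancel_right σ ρ]
  rw [hd.cayleyLength_mul, IsCycle.cayleyLength_swap_mul (isCycle_cycleOf σ hx) (by rwa [hρx]),
    add_assoc]

theorem cayleyLength_add_card_cycleType (σ : Perm β) :
    cayleyLength σ + Multiset.card σ.cycleType = #σ.support := by
  calc cayleyLength σ + Multiset.card σ.cycleType
      = (σ.cycleType.map fun k => k - 1 + 1).sum := by
        rw [Multiset.sum_map_add, Multiset.map_const', Multiset.sum_replicate, smul_eq_mul,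
          mul_one, cayleyLength]
    _ = σ.cycleType.sum := by
        rw [Multiset.map_congr rfl fun k hk =>
          Nat.sub_add_cancel (one_le_two.trans (two_le_of_mem_cycleType hk)), Multiset.map_id']
    _ = #σ.support := sum_cycleType σ

theorem cayleyLength_add_cycleCount {m : ℕ} (σ : Perm (Fin m)) :
    cayleyLength σ + cycleCount σ = m := by
  have hfix : #{i | σ i = i} + #σ.support = m := by
    simpa [support] using card_filter_add_card_filter_not (s := univ) fun i => σ i = i
  have := cayleyLength_add_card_cycleType σ
  rw [cycleCount]
  omega

theorem one_le_cycleCount {m : ℕ} [NeZero m] (σ : Perm (Fin m)) : 1 ≤ cycleCount σ := by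
  rcases eq_or_ne σ 1 with rfl | hσ
  · simpa [cycleCount] using NeZero.one_le
  · have := card_cycleType_pos.2 hσ
    rw [cycleCount]
    omega

theorem decomposeFin_symm_eq_swap_mul {n : ℕ} (p : Fin (n + 1)) (e : Perm (Fin n)) :
    decomposeFin.symm (p, e) = swap 0 p * decomposeFin.symm (0, e) := by
  ext x
  cases x using Fin.cases <;> simp

theorem decomposeFin_symm_zero_eq_extendDomain {n : ℕ} (e : Perm (Fin n)) :
    decomposeFin.symm (0, e) = e.extendDomain (finSuccAboveEquiv 0) := by
  refine Equiv.ext fun x => ?_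
  cases x using Fin.cases with
  | zero => rw [decomposeFin_symm_apply_zero, extendDomain_apply_not_subtype _ _ (by simp)]
  | succ i =>
    have hi : (finSuccAboveEquiv 0).symm ⟨i.succ, Fin.succ_ne_zero i⟩ = i := by
      rw [Equiv.symm_apply_eq, finSuccAboveEquiv_apply]
      simp
    rw [decomposeFin_symm_apply_succ, extendDomain_apply_subtype _ _ (b := i.succ)
      (Fin.succ_ne_zero i), hi, finSuccAboveEquiv_apply]
    simp

theorem cayleyLength_decomposeFin_symm_zero {n : ℕ} (e : Perm (Fin n)) :
    cayleyLength (decomposeFin.symm (0, e)) = cayleyLength e := by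
  rw [decomposeFin_symm_zero_eq_extendDomain, cayleyLength, cycleType_extendDomain, cayleyLength]

theorem cayleyLength_decomposeFin_symm_succ {n : ℕ} (q : Fin n) (e : Perm (Fin n)) :
    cayleyLength (decomposeFin.symm (q.succ, e)) = cayleyLength e + 1 := by
  have h0 : decomposeFin.symm (q.succ, e) 0 ≠ 0 := by simp
  rw [cayleyLength_swap_mul h0, decomposeFin_symm_apply_zero, decomposeFin_symm_eq_swap_mul,
    swap_mul_self_mul, cayleyLength_decomposeFin_symm_zero]

end Equiv.Perm

section ColoredPermutations

variable (α : ℝ) {n : ℕ}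

def IsTrivialOn (D : Fin n → Prop) (c : Fin n → ℕ) (σ : Perm (Fin n)) : Prop :=
  (∀ i, c (σ i) = c i) ∧ ∀ i, D i → σ i = i ∧ c i = 1

instance (D : Fin n → Prop) [DecidablePred D] (c : Fin n → ℕ) (σ : Perm (Fin n)) :
    Decidable (IsTrivialOn D c σ) := by
  unfold IsTrivialOn; infer_instance

noncomputable def trivialWeight (D : Fin n → Prop) [DecidablePred D] (c : Fin n → ℕ)
    (σ : Perm (Fin n)) : ℝ :=
  if IsTrivialOn D c σ then α ^ cayleyLength σ else 0

noncomputable def coloredPermSum (w : Fin n → ℕ) (D : Fin n → Prop) [DecidablePred D] : ℝ :=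
  ∑ x ∈ Fintype.piFinset (fun i => Icc 1 (w i)) ×ˢ univ, trivialWeight α D x.1 x.2

section Cons

variable (D : Fin (n + 1) → Prop) (c₀ : ℕ) (c : Fin n → ℕ) (e : Perm (Fin n))

theorem isTrivialOn_cons_decomposeFin_zero :
    IsTrivialOn D (Fin.cons c₀ c) (decomposeFin.symm (0, e)) ↔
      (D 0 → c₀ = 1) ∧ IsTrivialOn (fun i => D i.succ) c e := by
  simp only [IsTrivialOn, Fin.forall_fin_succ, decomposeFin_symm_apply_zero, Fin.cons_zero,
    decomposeFin_symm_apply_succ, swap_self, refl_apply, Fin.cons_succ, true_and, Fin.succ_inj]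
  tauto

theorem isTrivialOn_cons_decomposeFin_succ (q : Fin n) :
    IsTrivialOn D (Fin.cons c₀ c) (decomposeFin.symm (q.succ, e)) ↔
      (¬ D 0 ∧ ¬ D q.succ ∧ c₀ = c q) ∧ IsTrivialOn (fun i => D i.succ) c e := by
  simp only [IsTrivialOn, Fin.forall_fin_succ, decomposeFin_symm_apply_zero, Fin.cons_succ,
    Fin.cons_zero, decomposeFin_symm_apply_succ, swap_apply_def, Fin.succ_ne_zero, ↓reduceIte,
    Fin.succ_inj, false_and, imp_false]
  constructor
  · rintro ⟨⟨hq, hinv⟩, hD0, hfix⟩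
    refine ⟨⟨hD0, fun hDq => ?_, hq.symm⟩, fun i => ?_, fun i hi => ?_⟩
    · have := (hfix q hDq).1
      split_ifs at this with h
      · exact Fin.succ_ne_zero q this.symm
      · exact h (Fin.succ_injective _ this)
    · have := hinv i
      split_ifs at this with h
      · rwa [h, hq]
      · simpa using this
    · have := hfix i hi
      split_ifs at this with h
      · exact absurd this.1.symm (Fin.succ_ne_zero i)
      · exact ⟨Fin.succ_injective _ this.1, this.2⟩
  · rintro ⟨⟨hD0, hDq, rfl⟩, hinv, hfix⟩
    refine ⟨⟨rfl, fun i => ?_⟩, hD0, fun i hi => ?_⟩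
    · split_ifs with h
      · rw [Fin.cons_zero, ← h, hinv]
      · rw [Fin.cons_succ, hinv]
    · have hiq : e i ≠ q := fun h => hDq (by rwa [← h, (hfix i hi).1])
      rw [if_neg hiq, (hfix i hi).1]
      exact ⟨rfl, (hfix i hi).2⟩

variable [DecidablePred D]

theorem trivialWeight_cons_decomposeFin_zero :
    trivialWeight α D (Fin.cons c₀ c) (decomposeFin.symm (0, e)) =
      (if D 0 → c₀ = 1 then 1 else 0) * trivialWeight α (fun i => D i.succ) c e := by
  rw [trivialWeight, trivialWeight, ite_zero_mul_ite_zero, one_mul]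
  exact if_congr (isTrivialOn_cons_decomposeFin_zero ..)
    (by rw [cayleyLength_decomposeFin_symm_zero]) rfl

theorem trivialWeight_cons_decomposeFin_succ (q : Fin n) :
    trivialWeight α D (Fin.cons c₀ c) (decomposeFin.symm (q.succ, e)) =
      (if ¬ D 0 ∧ ¬ D q.succ ∧ c₀ = c q then α else 0) *
        trivialWeight α (fun i => D i.succ) c e := by
  rw [trivialWeight, trivialWeight, ite_zero_mul_ite_zero]
  exact if_congr (isTrivialOn_cons_decomposeFin_succ ..)
    (by rw [cayleyLength_decomposeFin_symm_succ, pow_succ, mul_comm]) rfl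

end Cons

theorem sum_piFinset_succ {M : Type*} [AddCommMonoid M] {γ : Fin (n + 1) → Type*}
    (S : ∀ i, Finset (γ i)) (f : (∀ i, γ i) → M) :
    ∑ c ∈ Fintype.piFinset S, f c =
      ∑ c₀ ∈ S 0, ∑ c ∈ Fintype.piFinset (Fin.tail S), f (Fin.cons c₀ c) := by
  have h := filter_piFinset_eq_map_consEquiv S fun _ => True
  rw [filter_true, filter_true] at h
  rw [h, sum_map, sum_product]
  rfl

theorem sum_extensions_at_zero {w : Fin (n + 1) → ℕ} (hw : Antitone w) (hw0 : 0 < w 0)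
    (D : Fin (n + 1) → Prop) [DecidablePred D] {c : Fin n → ℕ}
    (hc : c ∈ Fintype.piFinset fun k => Icc 1 (w k.succ)) :
    ∑ c₀ ∈ Icc 1 (w 0), ((if D 0 → c₀ = 1 then 1 else 0) +
        ∑ q : Fin n, if ¬ D 0 ∧ ¬ D q.succ ∧ c₀ = c q then α else 0) =
      if D 0 then 1 else α * #{j : Fin n | ¬ D j.succ} + w 0 := by
  have hcq : ∀ q, c q ∈ Icc 1 (w 0) := fun q => by
    have := mem_Icc.1 (Fintype.mem_piFinset.1 hc q)
    exact mem_Icc.2 ⟨this.1, this.2.trans (hw (Fin.zero_le _))⟩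
  rw [sum_add_distrib, sum_comm]
  by_cases h0 : D 0
  · simp [h0, hw0.ne']
  · have hq : ∀ q, ∑ c₀ ∈ Icc 1 (w 0), (if ¬ D q.succ ∧ c₀ = c q then α else 0) =
        if ¬ D q.succ then α else 0 := fun q => by
      split_ifs with hDq <;> simp [hDq, hcq q]
    simp [h0, hq, sum_ite, mul_comm, add_comm]

theorem coloredPermSum_succ {w : Fin (n + 1) → ℕ} (hw : Antitone w) (hw0 : 0 < w 0)
    (D : Fin (n + 1) → Prop) [DecidablePred D] :
    coloredPermSum α w D = (if D 0 then 1 else α * #{j : Fin n | ¬ D j.succ} + w 0) *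
      coloredPermSum α (fun i => w i.succ) (fun i => D i.succ) := by
  rw [coloredPermSum, coloredPermSum, sum_product, sum_product, sum_piFinset_succ]
  simp_rw [← Equiv.sum_comp decomposeFin.symm, Fintype.sum_prod_type, Fin.sum_univ_succ,
    trivialWeight_cons_decomposeFin_zero, trivialWeight_cons_decomposeFin_succ, Fin.tail_def,
    ← mul_sum, ← sum_mul, ← add_mul]
  rw [sum_comm, mul_sum]
  simp_rw [← sum_mul]
  exact sum_congr rfl fun c hc => by rw [sum_extensions_at_zero α hw hw0 D hc]

theorem coloredPermSum_eq_prod {w : Fin n → ℕ} (hw : Antitone w) (hw0 : ∀ i, 0 < w i)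
    (D : Fin n → Prop) [DecidablePred D] :
    coloredPermSum α w D = ∏ i with ¬ D i, (α * #{j | ¬ D j ∧ i < j} + w i) := by
  induction n with
  | zero => simp [coloredPermSum, trivialWeight, IsTrivialOn, cayleyLength]
  | succ n ih =>
    rw [coloredPermSum_succ α hw (hw0 0), ih (w := fun i => w i.succ)
      (hw.comp_monotone Fin.strictMono_succ.monotone) (fun i => hw0 i.succ), prod_filter,
      prod_filter, Fin.prod_univ_succ]
    simp [Fin.card_filter_univ_succ, Fin.succ_lt_succ_iff]

end ColoredPermutations

theorem sum_neg_one_pow_card_mul_ite_forall_mem {ι R : Type*} [Fintype ι] [DecidableEq ι]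
    [Ring R] (p : ι → Prop) [DecidablePred p] (a : R) :
    ∑ I : Finset ι, (-1) ^ #I * (if ∀ i ∈ I, p i then a else 0) =
      if ∀ i, ¬ p i then a else 0 := by
  have hsub : ({I | ∀ i ∈ I, p i} : Finset (Finset ι)) = (univ.filter p).powerset := by
    ext I
    simp [subset_iff]
  have halt : ∑ I ∈ (univ.filter p).powerset, (-1 : R) ^ #I =
      if univ.filter p = ∅ then 1 else 0 := by
    rw [← Int.cast_one, ← Int.cast_zero, ← apply_ite, ← sum_powerset_neg_one_pow_card]
    push_cast
    rfl
  simp_rw [mul_ite, mul_zero]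
  rw [← sum_filter, hsub, ← sum_mul, halt, ite_mul, one_mul, zero_mul]
  exact if_congr (by simp [filter_eq_empty_iff]) rfl rfl

theorem Icc_one_eq_image_univ (m : ℕ) : Icc 1 m = univ.image fun i : Fin m => i.val + 1 := by
  ext x
  simp only [mem_Icc, mem_image, mem_univ, true_and]
  constructor
  · intro hx
    exact ⟨⟨x - 1, by omega⟩, by simp only; omega⟩
  · rintro ⟨i, rfl⟩
    have := i.isLt
    omega

theorem sum_powerset_Icc_eq_sum_finset_fin (m : ℕ) (α : ℝ) (v : ℕ → ℕ) :
    ∑ I ∈ (Icc 1 m).powerset, (-1 : ℝ) ^ #I *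
        ∏ j ∈ Icc 1 m \ I, (α * ((m : ℝ) - j - #{i ∈ I | j < i}) + v j) =
      ∑ I : Finset (Fin m), (-1 : ℝ) ^ #I *
        ∏ i with i ∉ I, (α * #{j | j ∉ I ∧ i < j} + v (i + 1)) := by
  set f : Fin m → ℕ := fun i => i.val + 1
  have hf : Function.Injective f := fun i j h => Fin.ext (Nat.succ_injective h)
  rw [Icc_one_eq_image_univ, powerset_image, sum_image fun I _ J _ h => image_injective hf h,
    powerset_univ]
  refine sum_congr rfl fun I _ => ?_
  rw [card_image_of_injective _ hf, ← image_sdiff _ _ hf, prod_image hf.injOn, sdiff_eq_filter]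
  refine congrArg _ (prod_congr rfl fun i _ => ?_)
  have hI : #{k ∈ I.image f | f i < k} = #{j | j ∈ I ∧ i < j} := by
    rw [filter_image, card_image_of_injective _ hf]
    congr 1
    ext j
    simp only [mem_filter, mem_univ, true_and, f, add_lt_add_iff_right, Fin.val_fin_lt]
  have hsplit : #{j | j ∈ I ∧ i < j} + #{j | j ∉ I ∧ i < j} = m - 1 - i := by
    rw [← Fin.card_Ioi, ← filter_lt_eq_Ioi,
      ← card_filter_add_card_filter_not (s := {j | i < j}) (· ∈ I), filter_filter,
      filter_filter]
    simp only [and_comm]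
  have hcast := congrArg (Nat.cast : ℕ → ℝ) hsplit
  push_cast [Nat.sub_sub, Nat.cast_sub (show 1 + (i : ℕ) ≤ m by omega)] at hcast
  rw [hI]
  simp only [f]
  push_cast
  congr 2
  linarith

theorem sum_neg_one_pow_card_mul_coloredPermSum (α : ℝ) {n : ℕ} (w : Fin n → ℕ) :
    ∑ I : Finset (Fin n), (-1) ^ #I * coloredPermSum α w (· ∈ I) =
      ∑ x ∈ Fintype.piFinset (fun i => Icc 1 (w i)) ×ˢ univ with
        (∀ i, x.1 (x.2 i) = x.1 i) ∧ ∀ i, x.2 i = i → x.1 i ≠ 1,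
        α ^ cayleyLength x.2 := by
  simp_rw [coloredPermSum, mul_sum]
  rw [sum_comm, sum_filter]
  refine sum_congr rfl fun x _ => ?_
  simp only [trivialWeight, IsTrivialOn, ite_and]
  by_cases hinv : ∀ i, x.1 (x.2 i) = x.1 i
  · simp only [hinv, implies_true, if_true]
    convert sum_neg_one_pow_card_mul_ite_forall_mem (fun i => x.2 i = i ∧ x.1 i = 1)
      (α ^ cayleyLength x.2) using 1
    · congr!
    · simp only [not_and, ne_eq]
  · simp [hinv]

theorem sum_coloredDerangements_eq_JackD (L : List ℕ) (hL : 0 < L.headI) (α : ℝ) :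
    ∑ x ∈ Fintype.piFinset (fun i : Fin L.headI => Icc 1 (conjP L (i.val + 1))) ×ˢ univ with
        (∀ i, x.1 (x.2 i) = x.1 i) ∧ ∀ i, x.2 i = i → x.1 i ≠ 1, α ^ cayleyLength x.2 =
      JackD L α := by
  have : NeZero L.headI := ⟨hL.ne'⟩
  have hlen : ∀ σ : Perm (Fin L.headI), cayleyLength σ = L.headI - cycleCount σ := fun σ => by
    have := cayleyLength_add_cycleCount σ
    omega
  have hmaps : ∀ σ : Perm (Fin L.headI), cycleCount σ ∈ Icc 1 L.headI := fun σ =>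
    mem_Icc.2 ⟨one_le_cycleCount σ, by have := cayleyLength_add_cycleCount σ; omega⟩
  rw [JackD, ← sum_fiberwise_of_maps_to fun x _ => hmaps x.2]
  refine sum_congr rfl fun k _ => ?_
  rw [sum_congr rfl fun x hx => by rw [hlen, (mem_filter.1 hx).2], sum_const, nsmul_eq_mul, dCount,
    filter_filter]
  congr 2
  rw [← Set.ncard_coe_finset]
  congr 1
  ext x
  simp only [ne_eq, coe_filter, mem_product, Fintype.mem_piFinset, mem_Icc, mem_univ, and_true,
    Set.mem_ofPred_eq, ColoredDerangements, ColoredPerms]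
  tauto

theorem conjP_antitone (L : List ℕ) : Antitone (conjP L) := fun _ _ h =>
  List.Sublist.length_le (List.monotone_filter_right L fun _ ha =>
    decide_eq_true (le_trans h (of_decide_eq_true ha)))

theorem List.headI_mem {α : Type*} [Inhabited α] {l : List α} (h : l ≠ []) :
    l.headI ∈ l := by
  cases l with
  | nil => contradiction
  | cons a t => exact mem_cons_self

theorem conjP_pos {L : List ℕ} (hne : L ≠ []) {j : ℕ} (hj : j ≤ L.headI) : 0 < conjP L j :=
  List.length_pos_iff.2 <|
    List.ne_nil_of_mem (List.mem_filter.2 ⟨List.headI_mem hne, by simpa using hj⟩)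

theorem IsPartition.headI_pos {L : List ℕ} (hL : IsPartition L) (hne : L ≠ []) : 0 < L.headI :=
  hL.2 _ (List.headI_mem hne)

/-- Main theorem, combinatorial form. -/
theorem main_theorem_combinatorial (L : List ℕ) (hL : IsPartition L) (hne : L ≠ [])
    (α : ℝ) :
    ∑ I ∈ (Finset.Icc 1 L.headI).powerset,
      (-1 : ℝ) ^ I.card *
        ∏ j ∈ Finset.Icc 1 L.headI \ I,
          (α * ((L.headI : ℝ) - (j : ℝ) - (((I.filter fun i => j < i)).card : ℝ))
              + (conjP L j : ℝ)) = JackD L α := by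
  have hw : Antitone fun i : Fin L.headI => conjP L (i.val + 1) :=
    (conjP_antitone L).comp_monotone fun i j h => by simpa using h
  have hw0 : ∀ i : Fin L.headI, 0 < conjP L (i.val + 1) := fun i => conjP_pos hne i.isLt
  rw [sum_powerset_Icc_eq_sum_finset_fin, ← sum_coloredDerangements_eq_JackD L (hL.headI_pos hne),
    ← sum_neg_one_pow_card_mul_coloredPermSum]
  simp_rw [coloredPermSum_eq_prod α hw hw0]
end

section
/- For every integer n ≥ 2 and every real α, the Jack derangement numbers of the shapes (n) and (n−1, 1) satisfy D^{(n)}_α = α(n − 1) · D^{(n−1,1)}_α. -/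
open Finset

/-!
Let `D_m = ∑ α ^ (m − #cycles σ)` over the derangements `σ` of `m` points. For the shape `(n)`
every color is `1`, so `D^{(n)}_α = D_n`. For the hook `(n−1, 1)` only the first symbol may take
color `2`, which makes it a fixed point while no other symbol is fixed, so
`D^{(n−1,1)}_α = D_{n−1} + D_{n−2}`.

The theorem is then the weighted derangement recurrence `D_{m+2} = α (m+1) (D_{m+1} + D_m)`.
A derangement of `Option β` is `swap none (some a) * e.optionCongr` with `e` fixing no point other
than `a`, and splicing `none` into the cycle of `e` through `a` raises `m − #cycles` by one. If `e`
fixes nothing it is a derangement of `β`; if it fixes `a` it is a derangement of the other points.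
-/

namespace Equiv.Perm

variable {β γ : Type*} [DecidableEq β] [Fintype β] [DecidableEq γ] [Fintype γ]

/-- `card β` minus the number of cycles of `σ`, fixed points included. -/
def cycleDeficit (σ : Perm β) : ℕ := (σ.cycleType.map (· - 1)).sum

lemma cycleDeficit_one : cycleDeficit (1 : Perm β) = 0 := by
  simp [cycleDeficit]

lemma Disjoint.cycleDeficit_mul {σ τ : Perm β} (h : σ.Disjoint τ) :
    cycleDeficit (σ * τ) = cycleDeficit σ + cycleDeficit τ := by
  simp [cycleDeficit, h.cycleType_mul]

lemma IsCycle.cycleDeficit_eq {c : Perm β} (hc : c.IsCycle) : c.cycleDeficit = #c.support - 1 := by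
  simp [Perm.cycleDeficit, hc.cycleType]

lemma cycleDeficit_add_card_cycleType (σ : Perm β) :
    cycleDeficit σ + Multiset.card σ.cycleType = #σ.support := by
  have hsub : ∀ k ∈ σ.cycleType, k - 1 + 1 = k := fun k hk => by
    have := one_lt_of_mem_cycleType hk
    omega
  rw [← sum_cycleType, cycleDeficit]
  conv_rhs => rw [← Multiset.map_id' σ.cycleType, ← Multiset.map_congr rfl hsub,
    Multiset.sum_map_add]
  simp

lemma IsCycle.cycleDeficit_swap_mul {c : Perm β} (hc : c.IsCycle) {a : β} (ha : c a ≠ a) :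
    cycleDeficit (swap a (c a) * c) + 1 = cycleDeficit c := by
  by_cases h2 : c (c a) = a
  · have hswap : c = swap a (c a) := hc.eq_swap_of_apply_apply_eq_self ha h2
    nth_rw 2 [hswap]
    rw [swap_mul_self, cycleDeficit_one, hc.cycleDeficit_eq, hswap, card_support_swap ha.symm]
  · have hsupp := hc.two_le_card_support
    rw [(hc.swap_mul ha h2).cycleDeficit_eq, hc.cycleDeficit_eq, support_swap_mul_eq c a h2,
      sdiff_singleton_eq_erase, card_erase_of_mem (mem_support.2 ha)]
    omega

/-- Only the cycle through `a` is affected: `a` is split off it as a fixed point. -/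
lemma cycleDeficit_swap_mul {σ : Perm β} {a : β} (ha : σ a ≠ a) :
    cycleDeficit (swap a (σ a) * σ) + 1 = cycleDeficit σ := by
  set c := σ.cycleOf a
  have hc : c ∈ σ.cycleFactorsFinset := cycleOf_mem_cycleFactorsFinset_iff.2 (mem_support.2 ha)
  have hdisj : c.Disjoint (σ * c⁻¹) := (disjoint_mul_inv_of_mem_cycleFactorsFinset hc).symm
  have hσ : σ = c * (σ * c⁻¹) := by rw [hdisj.commute.eq, inv_mul_cancel_right]
  have hca : c a = σ a := cycleOf_apply_self σ a
  have hdisj' : (swap a (c a) * c).Disjoint (σ * c⁻¹) :=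
    hdisj.mono (fun x hx => (mem_support_swap_mul_imp_mem_support_ne hx).1) subset_rfl
  rw [← hca]
  conv_lhs => rw [hσ, ← mul_assoc, hdisj'.cycleDeficit_mul]
  conv_rhs => rw [hσ, hdisj.cycleDeficit_mul]
  rw [← (isCycle_cycleOf σ ha).cycleDeficit_swap_mul (hca ▸ ha)]
  ring

lemma cycleDeficit_ofSubtype {p : β → Prop} [DecidablePred p] (τ : Perm (Subtype p)) :
    cycleDeficit (ofSubtype τ) = cycleDeficit τ := by
  simp [cycleDeficit, cycleType_ofSubtype]

lemma cycleDeficit_permCongr (e : β ≃ γ) (σ : Perm β) :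
    cycleDeficit (e.permCongr σ) = cycleDeficit σ := by
  have : e.permCongr σ = σ.extendDomain (e.trans (subtypeUnivEquiv fun _ => trivial).symm) := by
    ext x
    rw [extendDomain_apply_subtype _ _ trivial]
    simp
  simp [this, cycleDeficit, cycleType_extendDomain]

lemma cycleDeficit_optionCongr (σ : Perm β) : cycleDeficit σ.optionCongr = cycleDeficit σ := by
  have : σ.optionCongr = σ.extendDomain (optionIsSomeEquiv β).symm := by
    ext (_ | x)
    · rw [extendDomain_apply_not_subtype _ _ (by simp)]
      simp
    · rw [show some x = ((optionIsSomeEquiv β).symm x : Option β) from rfl,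
        extendDomain_apply_image]
      simp [optionIsSomeEquiv]
  simp [this, cycleDeficit, cycleType_extendDomain]

end Equiv.Perm

open Equiv Equiv.Perm

section DecomposeOption

variable {β : Type*} [DecidableEq β]

lemma decomposeOption_symm_none_notMem_derangements (e : Perm β) :
    decomposeOption.symm (none, e) ∉ derangements (Option β) :=
  fun h => h none (by simp)

lemma decomposeOption_symm_some_mem_derangements_iff (a : β) (e : Perm β) :
    decomposeOption.symm (some a, e) ∈ derangements (Option β) ↔ ∀ x, e x = x → x = a := by
  simp only [derangements, Set.mem_ofPred_eq, Option.forall, decomposeOption_symm_apply, mul_apply,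
    optionCongr_apply, Option.map_some, Option.map_none, swap_apply_left]
  simp only [ne_eq, reduceCtorEq, not_false_eq_true, swap_apply_def, ↓reduceIte, Option.some.injEq,
    Option.ite_none_left_eq_some, not_and, true_and]
  exact forall_congr' fun x => by grind

lemma cycleDeficit_decomposeOption_symm_some [Fintype β] (a : β) (e : Perm β) :
    cycleDeficit (decomposeOption.symm (some a, e)) = cycleDeficit e + 1 := by
  set σ := decomposeOption.symm (some a, e)
  have hσ : σ none = some a := by simp [σ]
  have hdel : swap none (σ none) * σ = e.optionCongr := by
    simp [σ, ← mul_assoc]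
  rw [← cycleDeficit_swap_mul (hσ ▸ Option.some_ne_none a), hdel, cycleDeficit_optionCongr]

end DecomposeOption

section DerangementWeight

variable {β γ : Type*} [DecidableEq β] [Fintype β] [DecidableEq γ] [Fintype γ]

noncomputable def derangementWeight (β : Type*) [DecidableEq β] [Fintype β] (α : ℝ) : ℝ :=
  ∑ σ : derangements β, α ^ cycleDeficit (σ : Perm β)

lemma derangementWeight_eq_sum_filter (α : ℝ) :
    derangementWeight β α = ∑ σ : Perm β with σ ∈ derangements β, α ^ cycleDeficit σ := by
  unfold derangementWeight
  exact (sum_subtype (p := (· ∈ derangements β)) _ (fun σ => mem_filter_univ σ)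
    (fun σ => α ^ cycleDeficit σ)).symm

lemma derangementWeight_congr (e : β ≃ γ) (α : ℝ) :
    derangementWeight β α = derangementWeight γ α :=
  Fintype.sum_equiv e.derangementsCongr _ _ fun σ => by
    rw [← cycleDeficit_permCongr e]
    rfl

lemma derangementWeight_eq_fin (α : ℝ) :
    derangementWeight β α = derangementWeight (Fin (Fintype.card β)) α :=
  derangementWeight_congr (Fintype.equivFin β) α

lemma derangementWeight_subtype_ne {m : ℕ} (a : Fin (m + 1)) (α : ℝ) :
    derangementWeight {x // x ≠ a} α = derangementWeight (Fin m) α := by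
  rw [derangementWeight_eq_fin, Fintype.card_subtype_compl, Fintype.card_subtype_eq,
    Fintype.card_fin, Nat.add_sub_cancel]

lemma sum_fixedPoints_eq_singleton (a : β) (α : ℝ) :
    ∑ σ : Perm β with ∀ x, σ x = x ↔ x = a, α ^ cycleDeficit σ
      = derangementWeight {x // x ≠ a} α := by
  rw [sum_subtype (p := fun σ : Perm β => ∀ x, ¬x ≠ a ↔ x ∈ Function.fixedPoints σ) _
    (fun σ => by simp [Function.IsFixedPt, iff_comm])]
  exact (Fintype.sum_equiv (derangements.subtypeEquiv (· ≠ a)) _ _ fun τ => by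
    rw [← cycleDeficit_ofSubtype]
    rfl).symm

lemma sum_fixedPoints_subset_singleton (a : β) (α : ℝ) :
    ∑ σ : Perm β with ∀ x, σ x = x → x = a, α ^ cycleDeficit σ
      = derangementWeight β α + derangementWeight {x // x ≠ a} α := by
  rw [← sum_filter_add_sum_filter_not _ (fun σ : Perm β => σ a = a), add_comm,
    derangementWeight_eq_sum_filter, ← sum_fixedPoints_eq_singleton, filter_filter, filter_filter]
  congr 2 <;> ext σ <;> simp only [mem_filter, mem_univ, true_and]
  · exact ⟨fun h x hx => h.2 (h.1 x hx ▸ hx), fun h => ⟨fun x hx => absurd hx (h x), h a⟩⟩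
  · exact ⟨fun h x => ⟨h.1 x, fun hx => by subst hx; exact h.2⟩,
      fun h => ⟨fun x => (h x).1, (h a).2 rfl⟩⟩

lemma derangementWeight_option (α : ℝ) :
    derangementWeight (Option β) α
      = α * ∑ a : β, (derangementWeight β α + derangementWeight {x // x ≠ a} α) := by
  rw [derangementWeight_eq_sum_filter, sum_filter,
    ← Fintype.sum_equiv decomposeOption.symm _ _ fun _ => rfl, Fintype.sum_prod_type,
    Fintype.sum_option, mul_sum]
  simp only [decomposeOption_symm_none_notMem_derangements, if_false, sum_const_zero, zero_add,
    decomposeOption_symm_some_mem_derangements_iff, cycleDeficit_decomposeOption_symm_some]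
  refine sum_congr rfl fun a _ => ?_
  rw [← sum_fixedPoints_subset_singleton, sum_filter, mul_sum]
  refine sum_congr rfl fun e _ => ?_
  split_ifs <;> ring

lemma derangementWeight_fin_add_two (m : ℕ) (α : ℝ) :
    derangementWeight (Fin (m + 2)) α
      = α * (m + 1) * (derangementWeight (Fin (m + 1)) α + derangementWeight (Fin m) α) := by
  rw [derangementWeight_congr (finSuccEquiv (m + 1)), derangementWeight_option]
  simp only [derangementWeight_subtype_ne, sum_const, card_univ, Fintype.card_fin, nsmul_eq_mul]
  push_cast
  ring

end DerangementWeight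

section JackD

lemma cycleDeficit_add_cycleCount {m : ℕ} (σ : Perm (Fin m)) :
    cycleDeficit σ + cycleCount σ = m := by
  have hfix : #σ.support + #(univ.filter fun i => σ i = i) = m := by
    have := card_filter_add_card_filter_not (s := univ) (fun i => σ i = i)
    rwa [card_univ, Fintype.card_fin, add_comm] at this
  rw [cycleCount, ← add_assoc, cycleDeficit_add_card_cycleType, hfix]

lemma cycleCount_mem_Icc {m : ℕ} (hm : 1 ≤ m) (σ : Perm (Fin m)) : cycleCount σ ∈ Icc 1 m := by
  have hsum := cycleDeficit_add_cycleCount σ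
  refine mem_Icc.2 ⟨?_, by omega⟩
  rw [cycleCount]
  by_cases hσ : σ = 1
  · simpa [hσ] using hm
  · have := card_cycleType_pos.2 hσ
    omega

lemma jackD_eq_sum_of_range {L : List ℕ} (hL : 1 ≤ L.headI) {γ : Type*} [Fintype γ]
    (g : γ → (Fin L.headI → ℕ) × Perm (Fin L.headI)) (hg : Function.Injective g)
    (hrange : ColoredDerangements L = Set.range g) (α : ℝ) :
    JackD L α = ∑ t, α ^ cycleDeficit (g t).2 := by
  classical
  have hdCount : ∀ k, dCount L k = #{t | cycleCount (g t).2 = k} := fun k => by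
    have : {x | x ∈ ColoredDerangements L ∧ cycleCount x.2 = k}
        = g '' ↑(univ.filter fun t => cycleCount (g t).2 = k) := by
      ext x
      simp only [hrange, Set.mem_ofPred_eq, Set.mem_range, coe_filter, mem_univ, true_and,
        Set.mem_image]
      constructor
      · rintro ⟨⟨t, rfl⟩, hk⟩
        exact ⟨t, hk, rfl⟩
      · rintro ⟨t, hk, rfl⟩
        exact ⟨⟨t, rfl⟩, hk⟩
    rw [dCount, this, Set.ncard_image_of_injective _ hg, Set.ncard_coe_finset]
  have hdeficit : ∀ t, L.headI - cycleCount (g t).2 = cycleDeficit (g t).2 := fun t =>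
    Nat.sub_eq_of_eq_add (cycleDeficit_add_cycleCount _).symm
  calc JackD L α
      = ∑ k ∈ Icc 1 L.headI, ∑ t with cycleCount (g t).2 = k,
          α ^ (L.headI - cycleCount (g t).2) := by
        refine sum_congr rfl fun k _ => ?_
        rw [hdCount, sum_congr rfl fun t ht => by rw [(mem_filter.1 ht).2], sum_const,
          nsmul_eq_mul]
    _ = ∑ t, α ^ (L.headI - cycleCount (g t).2) :=
        sum_fiberwise_of_maps_to (fun t _ => cycleCount_mem_Icc hL _) _
    _ = ∑ t, α ^ cycleDeficit (g t).2 := by simp_rw [hdeficit]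

lemma conjP_singleton {n j : ℕ} (hj : j ≤ n) : conjP [n] j = 1 := by
  simp [conjP, hj]

lemma coloredDerangements_singleton (n : ℕ) :
    ColoredDerangements [n]
      = Set.range fun σ : derangements (Fin n) => ((1 : Fin n → ℕ), (σ : Perm (Fin n))) := by
  have hbound : ∀ i : Fin n, conjP [n] (i.1 + 1) = 1 := fun i => conjP_singleton i.2
  ext ⟨c, σ⟩
  constructor
  · rintro ⟨⟨hc, -⟩, hder⟩
    have hc1 : c = 1 := funext fun i => le_antisymm ((hc i).2.trans_eq (hbound i)) (hc i).1
    exact ⟨⟨σ, fun i hi => hder i hi (congrFun hc1 i)⟩, Prod.ext hc1.symm rfl⟩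
  · rintro ⟨⟨τ, hτ⟩, h⟩
    obtain ⟨rfl, rfl⟩ := Prod.ext_iff.1 h
    exact ⟨⟨fun i => ⟨le_rfl, (hbound i).ge⟩, fun i => rfl⟩, fun i hi => absurd hi (hτ i)⟩

def hookColoring (m : ℕ) (i : Fin (m + 1)) : ℕ := if i = 0 then 2 else 1

lemma one_le_hookColoring {m : ℕ} (i : Fin (m + 1)) : 1 ≤ hookColoring m i := by
  unfold hookColoring
  split_ifs <;> simp

lemma conjP_hook {m : ℕ} (i : Fin (m + 1)) : conjP [m + 1, 1] (i.1 + 1) = hookColoring m i := by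
  obtain ⟨_ | i, hi⟩ := i
  · simp [conjP, hookColoring]
  · simp [conjP, hookColoring, Fin.ext_iff, Nat.lt_of_succ_lt_succ hi]

lemma eq_one_or_eq_hookColoring {m : ℕ} {c : Fin (m + 1) → ℕ}
    (hc : ∀ i, 1 ≤ c i ∧ c i ≤ hookColoring m i) : c = 1 ∨ c = hookColoring m := by
  by_cases h0 : c 0 = 1
  · refine .inl (funext fun i => ?_)
    by_cases hi : i = 0
    · exact hi ▸ h0
    · have := hc i
      simp only [hookColoring, if_neg hi] at this
      exact le_antisymm this.2 this.1
  · refine .inr (funext fun i => ?_)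
    have := hc i
    by_cases hi : i = 0
    · subst hi
      simp only [hookColoring, if_true] at this ⊢
      omega
    · simp only [hookColoring, if_neg hi] at this ⊢
      omega

lemma coloredDerangements_hook (m : ℕ) :
    ColoredDerangements [m + 1, 1] = Set.range (Sum.elim
      (fun σ : derangements (Fin (m + 1)) => ((1 : Fin (m + 1) → ℕ), (σ : Perm (Fin (m + 1)))))
      (fun σ : {σ : Perm (Fin (m + 1)) // ∀ x, σ x = x ↔ x = 0} =>
        (hookColoring m, (σ : Perm (Fin (m + 1)))))) := by
  -- The symbols live in `Fin [m + 1, 1].headI`, only definitionally `Fin (m + 1)`: `simp` and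
  -- numerals do not see through it, hence the typed `Set.ext` and the ascriptions below.
  refine Set.ext fun (x : (Fin (m + 1) → ℕ) × Perm (Fin (m + 1))) => ?_
  obtain ⟨c, σ⟩ := x
  constructor
  · rintro ⟨⟨hc, hmono⟩, hder⟩
    rcases eq_one_or_eq_hookColoring fun i => (hc i).imp_right (·.trans_eq (conjP_hook i))
      with rfl | rfl
    · exact ⟨.inl ⟨σ, fun i hi => hder i hi rfl⟩, rfl⟩
    · have hσ0 : σ 0 = 0 := by
        have h0 : hookColoring m (σ 0) = hookColoring m 0 := hmono (0 : Fin (m + 1))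
        simpa [hookColoring] using h0
      exact ⟨.inr ⟨σ, fun x => ⟨fun hx => by_contra fun h => hder x hx (if_neg h),
        fun h => h ▸ hσ0⟩⟩, rfl⟩
  · rintro ⟨⟨τ, hτ⟩ | ⟨τ, hτ⟩, h⟩ <;> simp only [Sum.elim_inl, Sum.elim_inr, Prod.mk.injEq] at h <;>
      obtain ⟨rfl, rfl⟩ := h
    · exact ⟨⟨fun i => ⟨le_rfl, (one_le_hookColoring i).trans_eq (conjP_hook i).symm⟩,
        fun _ => rfl⟩, fun i hi => absurd hi (hτ i)⟩
    · refine ⟨⟨fun i => ⟨one_le_hookColoring i, (conjP_hook i).ge⟩,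
        fun (i : Fin (m + 1)) => ?_⟩, fun (i : Fin (m + 1)) hi => ?_⟩
      · show hookColoring m (τ i) = hookColoring m i
        exact if_congr (τ.injective.eq_iff' ((hτ 0).2 rfl)) rfl rfl
      · show hookColoring m i ≠ 1
        simp [hookColoring, (hτ i).1 hi]

lemma jackD_singleton {n : ℕ} (hn : 1 ≤ n) (α : ℝ) : JackD [n] α = derangementWeight (Fin n) α :=
  jackD_eq_sum_of_range (L := [n]) hn _ (fun _ _ h => Subtype.ext (Prod.ext_iff.1 h).2)
    (coloredDerangements_singleton n) α

lemma jackD_hook (m : ℕ) (α : ℝ) :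
    JackD [m + 1, 1] α = derangementWeight (Fin (m + 1)) α + derangementWeight (Fin m) α := by
  rw [jackD_eq_sum_of_range (by simp) _ ?_ (coloredDerangements_hook m), Fintype.sum_sum_type]
  · congr 1
    show ∑ σ : {σ : Perm (Fin (m + 1)) // ∀ x, σ x = x ↔ x = 0}, α ^ cycleDeficit σ.1 = _
    rw [← derangementWeight_subtype_ne 0, ← sum_fixedPoints_eq_singleton]
    -- `convert` reconciles the `Decidable` instances of the filter over `Fin (m + 1)`.
    convert (sum_subtype _ (fun σ => mem_filter_univ σ) (fun σ => α ^ cycleDeficit σ)).symm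
  · refine Function.Injective.sumElim (fun _ _ h => Subtype.ext (Prod.ext_iff.1 h).2)
      (fun _ _ h => Subtype.ext (Prod.ext_iff.1 h).2) fun _ _ h => ?_
    simpa [hookColoring] using congrFun (Prod.ext_iff.1 h).1 0

end JackD

/-- `D^{(n)}_α = α(n − 1) · D^{(n−1,1)}_α`. -/
theorem jackD_one_row_eq (n : ℕ) (hn : 2 ≤ n) (α : ℝ) :
    JackD [n] α = α * ((n : ℝ) - 1) * JackD [n - 1, 1] α := by
  obtain ⟨m, rfl⟩ := Nat.exists_eq_add_of_le' hn
  rw [jackD_singleton (by omega), show m + 2 - 1 = m + 1 from rfl, jackD_hook,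
    derangementWeight_fin_add_two]
  push_cast
  ring
end
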